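/- arXiv:2106.15961 — 2 statements merged into one kernel-verified Lean document; each statement's English description precedes it below -/
import Mathlib

section
/- Let G be an equilibrium graph in the max-distance network creation game where vertex a buys two distinct edges (a,a₁) and (a,a₂), and suppose there is a shortest path tree T rooted at a vertex b ≠ a such that (a,a₂) is not an edge of T and either (a,a₁) is not in T or a₁ is the parent of a in T. Then D(a) ≤ D(b) + 1 − α. -/
/-!
Max-distance network creation game (Demaine et al.):
`n` agents, agent `v` buys edges to the agents in `s v`, each at cost `α`.
The resulting graph has an edge `(u,v)` iff `u ∈ s v` or `v ∈ s u`.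
Agent `v`'s cost is `α * |s v|` plus its eccentricity (max distance, `⊤` if
disconnected). A profile is a (pure Nash) equilibrium if no agent can strictly
decrease its cost by unilaterally changing its edge set.
-/

open SimpleGraph
open scoped ENNReal

namespace NCG

/-- The undirected graph created by strategy profile `s`. -/
def graph (n : ℕ) (s : Fin n → Finset (Fin n)) : SimpleGraph (Fin n) :=
  SimpleGraph.fromRel (fun u v => v ∈ s u)

/-- Eccentricity `D(v) = max_u d_G(v,u)`, valued in `ℕ∞`. -/
noncomputable def ecc {n : ℕ} (G : SimpleGraph (Fin n)) (v : Fin n) : ℕ∞ :=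
  ⨆ u, G.edist v u

/-- The cost of agent `v` under profile `s`: `α·|s v| + D(v)` (infinite if the
graph is disconnected). -/
noncomputable def cost {n : ℕ} (α : ℝ) (s : Fin n → Finset (Fin n)) (v : Fin n) : ℝ≥0∞ :=
  ENNReal.ofReal α * (s v).card + (ecc (graph n s) v : ℝ≥0∞)

/-- Pure Nash equilibrium: no agent can strictly decrease its cost by a
unilateral deviation. -/
def IsEquilibrium {n : ℕ} (α : ℝ) (s : Fin n → Finset (Fin n)) : Prop :=
  ∀ (v : Fin n) (t : Finset (Fin n)), cost α s v ≤ cost α (Function.update s v t) v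

/-- Radius `rad(G) = min_v D(v)`. -/
noncomputable def radius {n : ℕ} (G : SimpleGraph (Fin n)) : ℕ∞ :=
  ⨅ v, ecc G v

/-- Diameter `diam(G) = max_v D(v)`. -/
noncomputable def diam {n : ℕ} (G : SimpleGraph (Fin n)) : ℕ∞ :=
  ⨆ v, ecc G v

/-- Interpret an extended natural number as a real number (`⊤ ↦ 0`). -/
noncomputable def entoR (x : ℕ∞) : ℝ := ((x : ℝ≥0∞)).toReal

/-- `T` is a shortest path tree of `G` rooted at `b`: a spanning tree of `G`
preserving all distances from `b`. -/
def IsSPT {n : ℕ} (G T : SimpleGraph (Fin n)) (b : Fin n) : Prop :=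
  T ≤ G ∧ T.IsTree ∧ ∀ v, T.edist b v = G.edist b v

/-- `p` is the parent of `a` in the tree `T` rooted at `b`. -/
def IsParent {n : ℕ} (T : SimpleGraph (Fin n)) (b a p : Fin n) : Prop :=
  T.Adj a p ∧ T.edist b p + 1 = T.edist b a

/-- The vertex set `B` (with more than two vertices) induces a biconnected
subgraph: removing any single vertex leaves it connected. -/
def IsBiconnected {n : ℕ} (G : SimpleGraph (Fin n)) (B : Finset (Fin n)) : Prop :=
  2 < B.card ∧ ∀ v ∈ B, (G.induce ((B : Set (Fin n)) \ {v})).Connected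

/-- `B` is (the vertex set of) a biconnected component of `G`: a maximal
biconnected subgraph with more than two vertices. -/
def IsBicomp {n : ℕ} (G : SimpleGraph (Fin n)) (B : Finset (Fin n)) : Prop :=
  IsBiconnected G B ∧ ∀ B' : Finset (Fin n), B ⊆ B' → IsBiconnected G B' → B' = B

/-- The induced subgraph of `G` on the vertex set `B`. -/
def Hgraph {n : ℕ} (G : SimpleGraph (Fin n)) (B : Finset (Fin n)) :
    SimpleGraph ((B : Set (Fin n))) :=
  G.induce (B : Set (Fin n))

/-- The degree of `v` inside the induced subgraph on `B`. -/
noncomputable def degH {n : ℕ} (G : SimpleGraph (Fin n)) (B : Finset (Fin n)) (v : Fin n) : ℕ :=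
  {u : Fin n | u ∈ B ∧ G.Adj v u}.ncard

/-- A min cycle: a cycle whose internal (cycle) distances agree with the
distances in `G`, i.e. an isometric cycle. -/
def IsMinCycle {n : ℕ} (G : SimpleGraph (Fin n)) {v : Fin n} (c : G.Walk v v) : Prop :=
  c.IsCycle ∧ ∀ x₁ ∈ c.support, ∀ x₂ ∈ c.support,
    c.toSubgraph.spanningCoe.edist x₁ x₂ = G.edist x₁ x₂

/-- A directed cycle: going around the cycle, each vertex buys the edge to its
successor (in one of the two cyclic orientations). -/
def IsDirectedCycle {n : ℕ} (s : Fin n → Finset (Fin n)) {v : Fin n}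
    (c : (graph n s).Walk v v) : Prop :=
  (∀ d ∈ c.darts, d.toProd.2 ∈ s d.toProd.1) ∨ (∀ d ∈ c.darts, d.toProd.1 ∈ s d.toProd.2)

/-- A shopping vertex of the biconnected component `B` w.r.t. the shortest path
tree `T`: a vertex of `B` buying an edge of the component that is not in `T`. -/
def IsShopping {n : ℕ} (s : Fin n → Finset (Fin n)) (T : SimpleGraph (Fin n))
    (B : Finset (Fin n)) (u : Fin n) : Prop :=
  u ∈ B ∧ ∃ w ∈ B, w ∈ s u ∧ (graph n s).Adj u w ∧ ¬ T.Adj u w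

/-- The social cost of profile `s`. -/
noncomputable def socialCost {n : ℕ} (α : ℝ) (s : Fin n → Finset (Fin n)) : ℝ≥0∞ :=
  ∑ v, cost α s v

end NCG

open NCG

/-!
Agent `a` deviates by dropping both edges `(a,a₁)` and `(a,a₂)` and buying `(a,b)` instead,
saving at least `α`. In the new graph every vertex `u` is still within `d_G(b,u)` of `b`: walk
down the tree `T` from `b`; its only edges that disappear are `(a,a₁)` and `(a,a₂)`, the second
is not in `T`, and the first can only be used to reach `a` itself (as `a₁` is not a child of `a`),
which is now adjacent to `b`. Hence `a`'s new eccentricity is at most `D(b) + 1`, and the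
equilibrium inequality gives `α + D(a) ≤ D(b) + 1`.
-/

namespace SimpleGraph

variable {V : Type*} {T H : SimpleGraph V} {b u : V}

theorem exists_adj_edist_eq_of_edist_eq_succ {k : ℕ} (h : T.edist b u = (k + 1 : ℕ)) :
    ∃ w, T.Adj w u ∧ T.edist b w = k := by
  obtain ⟨p, hp⟩ := exists_walk_of_edist_eq_coe h
  have hrev : p.reverse.length = k + 1 := by simpa using hp
  generalize p.reverse = r at hrev
  cases r with
  | nil => simp at hrev
  | @cons _ w _ hadj q =>
    have hlen : q.length = k := by simpa using hrev
    have hle : T.edist b w ≤ k := by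
      rw [edist_comm, ← hlen]
      exact edist_le q
    have hge : ((k + 1 : ℕ) : ℕ∞) ≤ T.edist b w + 1 := by
      rw [← h, ← edist_eq_one_iff_adj.mpr hadj.symm]
      exact SimpleGraph.edist_triangle
    refine ⟨w, hadj.symm, le_antisymm hle ?_⟩
    rw [Nat.cast_add, Nat.cast_one] at hge
    exact (ENat.add_le_add_iff_right ENat.one_ne_top).mp hge

theorem edist_le_of_forall_adj_edist_succ
    (h : ∀ w u, T.Adj w u → T.edist b w + 1 = T.edist b u → H.edist b u ≤ H.edist b w + 1)
    (u : V) : H.edist b u ≤ T.edist b u := by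
  suffices key : ∀ k : ℕ, ∀ u, T.edist b u = k → H.edist b u ≤ k by
    cases hu : T.edist b u using ENat.recTopCoe with
    | top => exact le_top
    | coe k => exact key k u hu
  intro k
  induction k with
  | zero =>
    intro u hu
    rw [Nat.cast_zero, edist_eq_zero_iff] at hu
    simp [hu]
  | succ k ih =>
    intro u hu
    obtain ⟨w, hwu, hw⟩ := exists_adj_edist_eq_of_edist_eq_succ hu
    calc H.edist b u ≤ H.edist b w + 1 := h w u hwu (by rw [hw, hu]; push_cast; rfl)
      _ ≤ k + 1 := by gcongr; exact ih w hw
      _ = (k + 1 : ℕ) := by push_cast; rfl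

end SimpleGraph

namespace NCG

variable {n : ℕ}

theorem ecc_le_edist_add_ecc (G : SimpleGraph (Fin n)) (a b : Fin n) :
    ecc G a ≤ G.edist a b + ecc G b :=
  iSup_le fun u =>
    SimpleGraph.edist_triangle.trans (add_le_add_right (le_iSup (G.edist b ·) u) _)

theorem graph_update_adj_of_mem {s : Fin n → Finset (Fin n)} {v x : Fin n} {t : Finset (Fin n)}
    (hx : x ∈ t) (hne : v ≠ x) : (graph n (Function.update s v t)).Adj v x := by
  simp [graph, hne, hx]

theorem graph_update_adj_of_adj {s : Fin n → Finset (Fin n)} {v : Fin n} {t : Finset (Fin n)}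
    {x y : Fin n} (h : (graph n s).Adj x y) (hn : ¬ (graph n (Function.update s v t)).Adj x y) :
    (x = v ∧ y ∈ s v \ t) ∨ (y = v ∧ x ∈ s v \ t) := by
  simp only [graph, fromRel_adj, Function.update_apply] at h hn
  grind

theorem ecc_graph_update_univ_erase_le_one (s : Fin n → Finset (Fin n)) (v : Fin n) :
    ecc (graph n (Function.update s v (Finset.univ.erase v))) v ≤ 1 :=
  iSup_le fun u => by
    rcases eq_or_ne v u with rfl | hne
    · simp
    · exact (edist_eq_one_iff_adj.mpr
        (graph_update_adj_of_mem (Finset.mem_erase.mpr ⟨hne.symm, Finset.mem_univ u⟩) hne)).le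

section Equilibrium

variable {α : ℝ} {s : Fin n → Finset (Fin n)}

/-- Buying an edge to every other vertex gives `v` a finite cost. -/
theorem IsEquilibrium.ecc_ne_top (hs : IsEquilibrium α s) (v : Fin n) :
    ecc (graph n s) v ≠ ⊤ := by
  have hfin : cost α s v ≠ ⊤ := by
    refine ne_top_of_le_ne_top ?_ (hs v (Finset.univ.erase v))
    refine ENNReal.add_ne_top.mpr ⟨by finiteness, ?_⟩
    exact ne_top_of_le_ne_top ENNReal.one_ne_top
      (by exact_mod_cast ecc_graph_update_univ_erase_le_one s v)
  exact ENat.toENNReal_ne_top.mp (ne_top_of_le_ne_top hfin le_add_self)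

theorem IsEquilibrium.toReal_cost_le (hs : IsEquilibrium α s) (hα : 0 ≤ α) (v : Fin n)
    (t : Finset (Fin n)) (hfin : ecc (graph n (Function.update s v t)) v ≠ ⊤) :
    α * (s v).card + entoR (ecc (graph n s) v) ≤
      α * t.card + entoR (ecc (graph n (Function.update s v t)) v) := by
  have h := hs v t
  simp only [cost, Function.update_self] at h
  have hfin₀ : (ecc (graph n s) v : ℝ≥0∞) ≠ ⊤ :=
    ENat.toENNReal_ne_top.mpr (hs.ecc_ne_top v)
  have hfin₁ : (ecc (graph n (Function.update s v t)) v : ℝ≥0∞) ≠ ⊤ :=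
    ENat.toENNReal_ne_top.mpr hfin
  have h' := ENNReal.toReal_mono (by finiteness) h
  rwa [ENNReal.toReal_add (by finiteness) hfin₀, ENNReal.toReal_add (by finiteness) hfin₁,
    ENNReal.toReal_mul, ENNReal.toReal_mul, ENNReal.toReal_ofReal hα] at h'

end Equilibrium

theorem entoR_mono {x y : ℕ∞} (h : x ≤ y) (hy : y ≠ ⊤) : entoR x ≤ entoR y :=
  ENNReal.toReal_mono (ENat.toENNReal_ne_top.mpr hy) (ENat.toENNReal_le.mpr h)

theorem entoR_add_one {x : ℕ∞} (hx : x ≠ ⊤) : entoR (x + 1) = entoR x + 1 := by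
  simp [entoR, ENNReal.toReal_add, hx]

/-- A lost edge `(a, x)` leads from `a` up to its parent, so a shortest path from `b` in `T` uses
it only to reach `a`, and `H` joins `a` to `b` directly. -/
theorem edist_le_of_lost_adj_parent {T H : SimpleGraph (Fin n)} {a b : Fin n}
    {R : Finset (Fin n)} (hT : T.Connected) (hba : H.Adj b a)
    (hR : ∀ x ∈ R, T.Adj a x → IsParent T b a x)
    (hlost : ∀ w u, T.Adj w u → ¬ H.Adj w u → (w = a ∧ u ∈ R) ∨ (u = a ∧ w ∈ R))
    (u : Fin n) : H.edist b u ≤ T.edist b u := by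
  refine edist_le_of_forall_adj_edist_succ (fun w u hwu hstep => ?_) u
  by_cases hH : H.Adj w u
  · rw [← edist_eq_one_iff_adj.mpr hH]
    exact SimpleGraph.edist_triangle
  rcases hlost w u hwu hH with ⟨rfl, hu⟩ | ⟨rfl, -⟩
  · have hparent := (hR u hu hwu).2
    have hfin : T.edist b u ≠ ⊤ := edist_ne_top_iff_reachable.mpr (hT.preconnected b u)
    lift T.edist b u to ℕ using hfin with d
    lift T.edist b w to ℕ using (by intro h; simp [h] at hstep) with e
    norm_cast at hstep hparent
    omega
  · rw [edist_eq_one_iff_adj.mpr hba]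
    exact le_add_self

end NCG

open NCG

theorem swap_delete_lemma_general (n : ℕ) (α : ℝ) (hα : 0 < α)
    (s : Fin n → Finset (Fin n)) (hs : IsEquilibrium α s)
    (a b a₁ a₂ : Fin n) (hab : a ≠ b) (ha12 : a₁ ≠ a₂)
    (hbuy₁ : a₁ ∈ s a) (hbuy₂ : a₂ ∈ s a)
    (hT : ∃ T : SimpleGraph (Fin n), IsSPT (graph n s) T b ∧ ¬ T.Adj a a₂ ∧
      (¬ T.Adj a a₁ ∨ IsParent T b a a₁)) :
    entoR (ecc (graph n s) a) ≤ entoR (ecc (graph n s) b) + 1 - α := by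
  obtain ⟨T, ⟨hTG, hTtree, hTdist⟩, hTa₂, hTa₁⟩ := hT
  set G := graph n s
  set t := insert b (((s a).erase a₁).erase a₂)
  set G' := graph n (Function.update s a t)
  have hcard : t.card + 1 ≤ (s a).card := by
    have h₁ := Finset.card_erase_add_one hbuy₁
    have h₂ := Finset.card_erase_add_one (Finset.mem_erase.mpr ⟨ha12.symm, hbuy₂⟩)
    have h₃ : t.card ≤ _ + 1 := Finset.card_insert_le _ _
    omega
  have hab' : G'.Adj a b := graph_update_adj_of_mem (Finset.mem_insert_self _ _) hab
  have hdist (u : Fin n) : G'.edist b u ≤ G.edist b u := by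
    refine hTdist u ▸ edist_le_of_lost_adj_parent (R := s a \ t) hTtree.connected hab'.symm
      (fun x hx hTx => ?_) (fun w u hwu hn => graph_update_adj_of_adj (hTG hwu) hn) u
    have hx' : x = a₁ ∨ x = a₂ := by simp [t] at hx; tauto
    rcases hx' with rfl | rfl
    · exact hTa₁.resolve_left (not_not_intro hTx)
    · exact absurd hTx hTa₂
  have hecc : ecc G' a ≤ ecc G b + 1 :=
    calc ecc G' a ≤ G'.edist a b + ecc G' b := ecc_le_edist_add_ecc G' a b
      _ ≤ 1 + ecc G b := add_le_add (edist_eq_one_iff_adj.mpr hab').le (iSup_mono hdist)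
      _ = ecc G b + 1 := add_comm _ _
  have hfin : ecc G b + 1 ≠ ⊤ := by simpa using hs.ecc_ne_top b
  have hcost := hs.toReal_cost_le hα.le a t (ne_top_of_le_ne_top hfin hecc)
  have hreal : entoR (ecc G' a) ≤ entoR (ecc G b) + 1 :=
    entoR_add_one (hs.ecc_ne_top b) ▸ entoR_mono hecc hfin
  have hsave : α * (t.card + 1) ≤ α * (s a).card := by gcongr; exact_mod_cast hcard
  linarith

/-- the swap-and-delete lemma `D(a) ≤ D(b) + 1 − α`. -/
theorem swap_delete_lemma (n : ℕ) (α : ℝ) (hα : 0 < α)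
    (s : Fin n → Finset (Fin n)) (hs : IsEquilibrium α s)
    (a b a₁ a₂ : Fin n) (hab : a ≠ b) (ha12 : a₁ ≠ a₂)
    (hbuy₁ : a₁ ∈ s a) (hadj₁ : (graph n s).Adj a a₁)
    (hbuy₂ : a₂ ∈ s a) (hadj₂ : (graph n s).Adj a a₂)
    (hT : ∃ T : SimpleGraph (Fin n), IsSPT (graph n s) T b ∧ ¬ T.Adj a a₂ ∧
      (¬ T.Adj a a₁ ∨ IsParent T b a a₁)) :
    entoR (ecc (graph n s) a) ≤ entoR (ecc (graph n s) b) + 1 - α :=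
  swap_delete_lemma_general n α hα s hs a b a₁ a₂ hab ha12 hbuy₁ hbuy₂ hT
end

section
/- In a tree equilibrium graph G of the max-distance network creation game with n ≥ 3 vertices, the diameter satisfies diam(G) ≤ 2α + 3. -/
/-!
Max-distance network creation game (Demaine et al.):
`n` agents, agent `v` buys edges to the agents in `s v`, each at cost `α`.
The resulting graph has an edge `(u,v)` iff `u ∈ s v` or `v ∈ s u`.
Agent `v`'s cost is `α * |s v|` plus its eccentricity (max distance, `⊤` if
disconnected). A profile is a (pure Nash) equilibrium if no agent can strictly
decrease its cost by unilaterally changing its edge set.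
-/

open SimpleGraph
open scoped ENNReal

open NCG

/-!
Let `a` be a vertex of eccentricity `D = diam G` and `c` a center. If `a` also bought the edge
`(a, c)`, its eccentricity would drop to at most `rad G + 1`, so equilibrium forces
`D ≤ α + rad G + 1`. In a tree `rad G ≤ ⌈D/2⌉`: on a diametral path from `a` to `w`, every other
vertex is reached from `a` or from `w` through the vertex `m` at distance `⌈D/2⌉` from `a`, so it is
at distance at most `⌈D/2⌉` from `m`. Hence `D ≤ α + D/2 + 3/2`.
-/

namespace SimpleGraph

variable {V : Type*} {G : SimpleGraph V}

lemma Walk.dist_add_dist_le_length_of_mem_support {u v m : V} (q : G.Walk u v)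
    (hm : m ∈ q.support) : G.dist u m + G.dist m v ≤ q.length := by
  classical
  rw [← q.take_spec hm, Walk.length_append]
  exact Nat.add_le_add (dist_le _) (dist_le _)

lemma eccent_le_edist_add_eccent (u v : V) : G.eccent u ≤ G.edist u v + G.eccent v :=
  (eccent_le_iff _ _).2 fun _ => G.edist_triangle.trans (add_le_add_right edist_le_eccent _)

lemma eccent_anti {G' : SimpleGraph V} (h : G ≤ G') (u : V) : G'.eccent u ≤ G.eccent u :=
  iSup_mono fun _ => edist_anti h

/-- A walk from `a` to `x` avoiding `m` and one from `w` to `x` avoiding `m` would give a second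
path from `a` to `w`. -/
lemma IsTree.mem_support_or_mem_support (hG : G.IsTree) {a w m x : V} {p : G.Walk a w}
    (hp : p.IsPath) (hm : m ∈ p.support) (qa : G.Walk a x) (qw : G.Walk w x) :
    m ∈ qa.support ∨ m ∈ qw.support := by
  classical
  have hbypass : (qa.append qw.reverse).bypass = p :=
    (hG.existsUnique_path a w).unique (Walk.bypass_isPath _) hp
  have := (qa.append qw.reverse).support_bypass_subset_support (hbypass ▸ hm)
  simpa [Walk.mem_support_append_iff] using this

lemma IsTree.dist_add_dist_le_or_dist_add_dist_le (hG : G.IsTree) {a w m : V}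
    {p : G.Walk a w} (hp : p.IsPath) (hm : m ∈ p.support) (x : V) :
    G.dist a m + G.dist m x ≤ G.dist a x ∨ G.dist w m + G.dist m x ≤ G.dist w x := by
  obtain ⟨qa, hqa⟩ := hG.connected.exists_walk_length_eq_dist a x
  obtain ⟨qw, hqw⟩ := hG.connected.exists_walk_length_eq_dist w x
  rw [← hqa, ← hqw]
  exact (hG.mem_support_or_mem_support hp hm qa qw).imp
    qa.dist_add_dist_le_length_of_mem_support qw.dist_add_dist_le_length_of_mem_support

lemma IsTree.exists_forall_dist_le (hG : G.IsTree) {a w : V}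
    (hmax : ∀ x y, G.dist x y ≤ G.dist a w) :
    ∃ m, ∀ x, G.dist m x ≤ (G.dist a w + 1) / 2 := by
  obtain ⟨p, hp⟩ := hG.connected.exists_walk_length_eq_dist a w
  set D := G.dist a w
  set k := (D + 1) / 2
  refine ⟨p.getVert k, fun x => ?_⟩
  have ham : G.dist a (p.getVert k) ≤ k := (dist_le (p.take k)).trans (by simp)
  have hmw : G.dist (p.getVert k) w ≤ D - k := (dist_le (p.drop k)).trans (by simp [hp])
  have htri : D ≤ G.dist a (p.getVert k) + G.dist (p.getVert k) w :=
    hG.connected.dist_triangle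
  have hwm : G.dist w (p.getVert k) = G.dist (p.getVert k) w := dist_comm
  have := hmax a x
  have := hmax w x
  rcases hG.dist_add_dist_le_or_dist_add_dist_le (p.isPath_of_length_eq_dist hp)
    (p.getVert_mem_support k) x with h | h <;> omega

lemma IsTree.two_mul_radius_le_ediam_add_one [Finite V] (hG : G.IsTree) :
    2 * G.radius ≤ G.ediam + 1 := by
  have := hG.connected.nonempty
  obtain ⟨a, w, haw⟩ := G.exists_edist_eq_ediam_of_finite
  have hcoe : ∀ x y, (G.dist x y : ℕ∞) = G.edist x y := fun x y =>
    (hG.connected x y).coe_dist_eq_edist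
  have hmax : ∀ x y, G.dist x y ≤ G.dist a w := fun x y => by
    have : G.edist x y ≤ G.edist a w := haw ▸ edist_le_ediam
    rwa [← hcoe, ← hcoe, Nat.cast_le] at this
  obtain ⟨m, hm⟩ := hG.exists_forall_dist_le hmax
  have hrad : G.radius ≤ ((G.dist a w + 1) / 2 : ℕ) :=
    radius_le_eccent.trans <| (eccent_le_iff _ _).2 fun x => by
      rw [← hcoe]; exact_mod_cast hm x
  calc 2 * G.radius ≤ 2 * ((G.dist a w + 1) / 2 : ℕ) := by gcongr
    _ ≤ G.dist a w + 1 := by exact_mod_cast Nat.mul_div_le _ _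
    _ = G.ediam + 1 := by rw [hcoe, haw]

end SimpleGraph

namespace NCG

variable {n : ℕ}

lemma ecc_eq_eccent (G : SimpleGraph (Fin n)) (v : Fin n) : ecc G v = G.eccent v := rfl

lemma diam_eq_ediam (G : SimpleGraph (Fin n)) : diam G = G.ediam := rfl

lemma graph_mono {s t : Fin n → Finset (Fin n)} (h : ∀ v, s v ⊆ t v) : graph n s ≤ graph n t := by
  intro u v huv
  simp only [graph, fromRel_adj] at huv ⊢
  exact ⟨huv.1, huv.2.imp (@h u v) (@h v u)⟩

lemma edist_le_one_of_mem {s : Fin n → Finset (Fin n)} {a m : Fin n} (h : m ∈ s a) :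
    (graph n s).edist a m ≤ 1 := by
  rw [edist_le_one_iff_adj_or_eq, graph, fromRel_adj]
  by_cases ham : a = m
  · exact Or.inr ham
  · exact Or.inl ⟨ham, Or.inl h⟩

lemma IsEquilibrium.eccent_le {α : ℝ} {s : Fin n → Finset (Fin n)} (hs : IsEquilibrium α s)
    (a m : Fin n) :
    ((graph n s).eccent a : ℝ≥0∞) ≤ ENNReal.ofReal α + (graph n s).eccent m + 1 := by
  set t := insert m (s a)
  set s' := Function.update s a t
  have hle : graph n s ≤ graph n s' := graph_mono fun v => by
    by_cases hv : v = a
    · subst hv; simp [s', t, Finset.subset_insert]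
    · simp [s', hv]
  have hecc : (graph n s').eccent a ≤ 1 + (graph n s).eccent m :=
    (eccent_le_edist_add_eccent a m).trans <| add_le_add
      (edist_le_one_of_mem (by simp [s', t])) (eccent_anti hle m)
  have hcard : (t.card : ℝ≥0∞) ≤ (s a).card + 1 := by exact_mod_cast Finset.card_insert_le m (s a)
  have hfin : ENNReal.ofReal α * (s a).card ≠ ⊤ := by finiteness
  refine (ENNReal.add_le_add_iff_left hfin).1 ?_
  calc ENNReal.ofReal α * (s a).card + (graph n s).eccent a
      ≤ ENNReal.ofReal α * t.card + (graph n s').eccent a := by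
        simpa [cost, ecc_eq_eccent, s'] using hs a t
    _ ≤ ENNReal.ofReal α * ((s a).card + 1) + ((1 + (graph n s).eccent m : ℕ∞) : ℝ≥0∞) := by
        gcongr
    _ = ENNReal.ofReal α * (s a).card + (ENNReal.ofReal α + (graph n s).eccent m + 1) := by
        push_cast; ring

end NCG

theorem tree_equilibrium_diam_general (n : ℕ) (α : ℝ) (hα : 0 < α)
    (s : Fin n → Finset (Fin n)) (hs : IsEquilibrium α s)
    (htree : (graph n s).IsTree) :
    entoR (NCG.diam (graph n s)) ≤ 2 * α + 3 := by
  set G := graph n s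
  have := htree.connected.nonempty
  obtain ⟨a, ha⟩ := G.exists_eccent_eq_ediam_of_finite
  obtain ⟨c, hc⟩ := G.exists_eccent_eq_radius
  have hdev := hs.eccent_le a c
  rw [ha, hc] at hdev
  have hcenter := htree.two_mul_radius_le_ediam_add_one
  have hD : G.ediam ≠ ⊤ := connected_iff_ediam_ne_top.mp htree.connected
  have hr : G.radius ≠ ⊤ := ne_top_of_le_ne_top hD radius_le_ediam
  rw [diam_eq_ediam]
  lift G.ediam to ℕ using hD with D
  lift G.radius to ℕ using hr with r
  have hcenter' : (2 * r : ℝ) ≤ D + 1 := by exact_mod_cast hcenter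
  have hdev' : (D : ℝ) ≤ α + r + 1 := by
    rw [ENat.toENNReal_coe, ENat.toENNReal_coe] at hdev
    simpa [ENNReal.toReal_add, hα.le] using ENNReal.toReal_mono (by finiteness) hdev
  simp only [entoR, ENat.toENNReal_coe, ENNReal.toReal_natCast]
  linarith

/-- a tree equilibrium graph on `n ≥ 3` vertices has diameter at
most `2α + 3`. -/
theorem tree_equilibrium_diam (n : ℕ) (hn : 3 ≤ n) (α : ℝ) (hα : 0 < α)
    (s : Fin n → Finset (Fin n)) (hs : IsEquilibrium α s)
    (htree : (graph n s).IsTree) :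
    entoR (NCG.diam (graph n s)) ≤ 2 * α + 3 :=
  tree_equilibrium_diam_general n α hα s hs htree
end
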